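/- Let X be an N×N matrix whose entries are pairwise anticommuting odd generators of an exterior algebra over ℤ. If p is odd, then Tr(X^p) = p · T̃ for some element T̃ of the exterior algebra with integer coefficients in the ordered monomial basis. The proof mechanism: the cyclic group of order p acts freely on the set of p-tuples of pairwise distinct matrix-entry positions forming a closed cycle, and within each orbit all p terms carry the same sign. -/

import Mathlib

open ExteriorAlgebra

section ExtAlg

variable {R : Type*} {Mod : Type*} [CommRing R] [AddCommGroup Mod] [Module R Mod]

local notation "ιι" => ExteriorAlgebra.ι R (M := Mod)

lemma iota_anticomm (v w : Mod) : ιι v * ιι w = -(ιι w * ιι v) :=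
  eq_neg_of_add_eq_zero_left (ExteriorAlgebra.ι_add_mul_swap v w)

lemma iota_mul_list (v : Mod) (l : List Mod) :
    ιι v * (l.map ιι).prod = ((-1 : ℤ) ^ l.length) • ((l.map ιι).prod * ιι v) := by
  induction l with
  | nil => simp
  | cons w t ih =>
    simp only [List.map_cons, List.prod_cons, List.length_cons]
    rw [← mul_assoc, iota_anticomm v w, neg_mul, mul_assoc, ih]
    rw [mul_smul_comm, ← mul_assoc]
    rw [pow_succ, mul_comm ((-1:ℤ)^t.length) (-1), mul_smul]
    simp

lemma iota_mul_list_mem (v : Mod) (l : List Mod) (hv : v ∈ l) :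
    ιι v * (l.map ιι).prod = 0 := by
  induction l with
  | nil => simp at hv
  | cons w t ih =>
    simp only [List.map_cons, List.prod_cons]
    rcases List.mem_cons.mp hv with h | h
    · subst h
      rw [← mul_assoc, ExteriorAlgebra.ι_sq_zero, zero_mul]
    · rw [← mul_assoc, iota_anticomm v w, neg_mul, mul_assoc, ih h, mul_zero, neg_zero]

lemma iota_list_not_nodup (l : List Mod) (h : ¬ l.Nodup) : (l.map ιι).prod = 0 := by
  induction l with
  | nil => simp at h
  | cons w t ih =>
    simp only [List.map_cons, List.prod_cons]
    rw [List.nodup_cons] at h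
    push_neg at h
    by_cases hw : w ∈ t
    · exact iota_mul_list_mem w t hw
    · rw [ih (h hw), mul_zero]

lemma iota_list_rotate (l : List Mod) (hodd : Odd l.length) :
    ((l.rotate 1).map ιι).prod = (l.map ιι).prod := by
  cases l with
  | nil => simp
  | cons a t =>
    have : (a :: t).rotate 1 = t ++ [a] := by
      rw [List.rotate_cons_succ, List.rotate_zero]
    rw [this]
    simp only [List.map_append, List.map_cons, List.map_nil, List.prod_append,
      List.prod_cons, List.prod_nil, mul_one]
    rw [iota_mul_list (R := R) a t]
    have ht : Even t.length := by
      rcases hodd with ⟨k, hk⟩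
      simp only [List.length_cons] at hk
      exact ⟨k, by omega⟩
    rw [ht.neg_one_pow, one_smul]

end ExtAlg

section MatrixPaths

variable {A : Type*} [Ring A] {N : ℕ}

/-- product along a chain of indices -/
def chainProd (M : Matrix (Fin N) (Fin N) A) : Fin N → List (Fin N) → Fin N → A
  | i, [], j => M i j
  | i, a :: l, j => M i a * chainProd M a l j

lemma pow_apply_eq_sum_chain (M : Matrix (Fin N) (Fin N) A) (n : ℕ) (i j : Fin N) :
    (M ^ (n + 1)) i j = ∑ g : Fin n → Fin N, chainProd M i (List.ofFn g) j := by
  induction n generalizing i j with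
  | zero =>
    simp [chainProd, Finset.sum_const]
  | succ n ih =>
    rw [pow_succ', Matrix.mul_apply]
    simp_rw [ih, Finset.mul_sum]
    rw [← Fintype.sum_prod_type']
    apply Fintype.sum_equiv (Fin.consEquiv (fun _ => Fin N))
    rintro ⟨a, g⟩
    simp [Fin.consEquiv, List.ofFn_succ, chainProd, Fin.cons_succ]

lemma trace_pow_eq_sum_chain (M : Matrix (Fin N) (Fin N) A) (m : ℕ) :
    Matrix.trace (M ^ (m + 1)) =
      ∑ f : Fin (m + 1) → Fin N,
        chainProd M (f 0) (List.ofFn (fun i : Fin m => f i.succ)) (f 0) := by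
  rw [Matrix.trace]
  simp_rw [Matrix.diag, pow_apply_eq_sum_chain]
  rw [← Fintype.sum_prod_type']
  apply Fintype.sum_equiv (Fin.consEquiv (fun _ => Fin N))
  rintro ⟨a, g⟩
  simp [Fin.consEquiv, Fin.cons_succ]

lemma chainProd_eq_zipWith (M : Matrix (Fin N) (Fin N) A) (i j : Fin N) (l : List (Fin N)) :
    chainProd M i l j = (List.zipWith (fun a b => M a b) (i :: l) (l ++ [j])).prod := by
  induction l generalizing i with
  | nil => simp [chainProd]
  | cons a t ih => simp [chainProd, ih]

lemma fin_add_one_val {m : ℕ} (k : ℕ) (hk : k < m + 1) :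
    (⟨k, hk⟩ : Fin (m + 1)) + 1 = ⟨(k + 1) % (m + 1), Nat.mod_lt _ (Nat.succ_pos m)⟩ := by
  apply Fin.ext
  rw [Fin.add_def, Fin.val_one']
  exact Nat.add_mod_mod _ _ _

lemma zipWith_eq_cycList (M : Matrix (Fin N) (Fin N) A) {m : ℕ} (f : Fin (m + 1) → Fin N) :
    List.zipWith (fun a b => M a b) (f 0 :: List.ofFn (fun i : Fin m => f i.succ))
        (List.ofFn (fun i : Fin m => f i.succ) ++ [f 0]) =
      (List.finRange (m + 1)).map (fun k => M (f k) (f (k + 1))) := by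
  apply List.ext_getElem
  · simp
  intro k h1 h2
  simp only [List.length_zipWith, List.length_cons, List.length_ofFn, List.length_append,
    List.length_map, List.length_finRange] at h1 h2
  rw [List.getElem_zipWith, List.getElem_map, List.getElem_finRange]
  have hk1 : k < m + 1 := by omega
  simp only [Fin.cast_mk]
  rw [fin_add_one_val]
  have hfst : (f 0 :: List.ofFn (fun i : Fin m => f i.succ))[k]'(by simp; omega) =
      f ⟨k, hk1⟩ := by
    rcases k with _ | k
    · simp only [List.getElem_cons_zero]
      congr 1
    · rw [List.getElem_cons_succ, List.getElem_ofFn]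
      congr 1
      all_goals apply Fin.ext
      all_goals simp
  have hsnd : (List.ofFn (fun i : Fin m => f i.succ) ++ [f 0])[k]'(by simp; omega) =
      f ⟨(k + 1) % (m + 1), Nat.mod_lt _ (Nat.succ_pos m)⟩ := by
    by_cases hk : k < m
    · rw [List.getElem_append_left (by simpa using hk), List.getElem_ofFn]
      congr 1
      all_goals apply Fin.ext
      all_goals simp [Nat.mod_eq_of_lt (by omega : k + 1 < m + 1)]
    · have hk' : k = m := by omega
      subst hk'
      rw [List.getElem_append_right (by simp)]
      simp only [List.length_ofFn, Nat.sub_self, List.getElem_cons_zero]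
      congr 1
      all_goals apply Fin.ext
      all_goals simp [Nat.mod_self]
  rw [hfst, hsnd]

lemma trace_pow_eq_sum_cyc (M : Matrix (Fin N) (Fin N) A) (m : ℕ) :
    Matrix.trace (M ^ (m + 1)) =
      ∑ f : Fin (m + 1) → Fin N,
        ((List.finRange (m + 1)).map (fun k => M (f k) (f (k + 1)))).prod := by
  rw [trace_pow_eq_sum_chain]
  apply Finset.sum_congr rfl
  intro f _
  rw [chainProd_eq_zipWith, zipWith_eq_cycList]

end MatrixPaths

namespace OddTrace

variable {N m : ℕ}

open scoped Fin.NatCast Fin.CommRing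

/-- The vector generator attached to step `k` of the cyclic path `f`. -/
def gvec (f : Fin (m + 1) → Fin N) (k : Fin (m + 1)) : (Fin N × Fin N) → ℤ :=
  Pi.single (f k, f (k + 1)) (1 : ℤ)

def vlist (f : Fin (m + 1) → Fin N) : List ((Fin N × Fin N) → ℤ) :=
  (List.finRange (m + 1)).map (gvec f)

noncomputable def trm (f : Fin (m + 1) → Fin N) : ExteriorAlgebra ℤ ((Fin N × Fin N) → ℤ) :=
  ((vlist f).map (ExteriorAlgebra.ι ℤ)).prod

def shiftF (j : Fin (m + 1)) (f : Fin (m + 1) → Fin N) : Fin (m + 1) → Fin N :=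
  fun k => f (k + j)

lemma shiftF_shiftF (i j : Fin (m + 1)) (f : Fin (m + 1) → Fin N) :
    shiftF j (shiftF i f) = shiftF (j + i) f := by
  funext k
  simp [shiftF, add_assoc]

lemma shiftF_zero (f : Fin (m + 1) → Fin N) : shiftF 0 f = f := by
  funext k; simp [shiftF]

lemma fin_add_one_val' (k : ℕ) (hk : k < m + 1) :
    (⟨k, hk⟩ : Fin (m + 1)) + 1 = ⟨(k + 1) % (m + 1), Nat.mod_lt _ (Nat.succ_pos m)⟩ := by
  apply Fin.ext
  rw [Fin.add_def, Fin.val_one']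
  exact Nat.add_mod_mod _ _ _

lemma vlist_getElem (f : Fin (m + 1) → Fin N) (k : ℕ) (hk : k < m + 1) :
    (vlist f)[k]'(by simp [vlist]; omega) = gvec f ⟨k, hk⟩ := by
  show ((List.finRange (m + 1)).map (gvec f))[k]'(by simp; omega) = _
  rw [List.getElem_map, List.getElem_finRange]
  congr 1

lemma vlist_length (f : Fin (m + 1) → Fin N) : (vlist f).length = m + 1 := by
  simp [vlist]

lemma vlist_shift (f : Fin (m + 1) → Fin N) :
    vlist (shiftF 1 f) = (vlist f).rotate 1 := by
  apply List.ext_getElem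
  · simp [vlist_length]
  intro k h1 h2
  rw [vlist_length] at h1
  rw [List.getElem_rotate]
  simp only [vlist_length]
  rw [vlist_getElem _ k h1, vlist_getElem f ((k + 1) % (m + 1)) (Nat.mod_lt _ (Nat.succ_pos m))]
  rw [← fin_add_one_val' k h1]
  rfl


lemma trm_shift (hm : Even m) (f : Fin (m + 1) → Fin N) :
    trm (shiftF 1 f) = trm f := by
  rw [trm, trm, vlist_shift]
  exact iota_list_rotate (R := ℤ) _ (by rw [vlist_length]; exact hm.add_one)

lemma trm_shift_nat (hm : Even m) (j : ℕ) :
    ∀ f : Fin (m + 1) → Fin N, trm (shiftF (j : Fin (m + 1)) f) = trm f := by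
  induction j with
  | zero => intro f; rw [Nat.cast_zero, shiftF_zero]
  | succ j ih =>
    intro f
    have h1 : shiftF ((j + 1 : ℕ) : Fin (m + 1)) f = shiftF 1 (shiftF (j : Fin (m + 1)) f) := by
      rw [shiftF_shiftF]
      congr 1
      push_cast
      ring
    rw [h1, trm_shift hm, ih]

lemma trm_shiftF (hm : Even m) (j : Fin (m + 1)) (f : Fin (m + 1) → Fin N) :
    trm (shiftF j f) = trm f := by
  have := trm_shift_nat hm j.val f
  rwa [Fin.cast_val_eq_self] at this

lemma trm_eq_zero_of_period (f : Fin (m + 1) → Fin N) (s : Fin (m + 1)) (hs : s ≠ 0)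
    (hper : ∀ k, f (k + s) = f k) : trm f = 0 := by
  apply iota_list_not_nodup (R := ℤ)
  intro hnd
  have hsv : (s : ℕ) ≠ 0 := fun h => hs (Fin.ext h)
  have hl0 : (0 : ℕ) < (vlist f).length := by rw [vlist_length]; omega
  have hls : (s : ℕ) < (vlist f).length := by rw [vlist_length]; exact s.isLt
  have h1 : (vlist f)[(0 : ℕ)]'hl0 = gvec f 0 := by
    rw [vlist_getElem f 0 (Nat.succ_pos m)]
    congr 1
  have h2 : (vlist f)[(s : ℕ)]'hls = gvec f s := by
    rw [vlist_getElem f s s.isLt]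
  have hgv : gvec f s = gvec f 0 := by
    unfold gvec
    have e1 : f s = f 0 := by have := hper 0; rwa [zero_add] at this
    have e2 : f (s + 1) = f (0 + 1) := by
      have := hper 1; rw [add_comm 1 s] at this; rw [this, zero_add, ← zero_add (1 : Fin (m+1))]
    rw [e1, e2]
  have heq : (vlist f)[(0 : ℕ)]'hl0 = (vlist f)[(s : ℕ)]'hls := by rw [h1, h2, hgv]
  exact hsv ((hnd.getElem_inj_iff.mp heq).symm)

/-- cyclic-shift setoid on paths -/
def pathSetoid (N m : ℕ) : Setoid (Fin (m + 1) → Fin N) where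
  r f g := ∃ j : Fin (m + 1), g = shiftF j f
  iseqv := by
    constructor
    · intro f; exact ⟨0, (shiftF_zero f).symm⟩
    · rintro f g ⟨j, rfl⟩
      exact ⟨-j, by rw [shiftF_shiftF, neg_add_cancel, shiftF_zero]⟩
    · rintro f g h ⟨i, rfl⟩ ⟨j, rfl⟩
      exact ⟨j + i, by rw [shiftF_shiftF]⟩

end OddTrace

open OddTrace in
/-- Odd-trace divisibility: if `X` is the `N × N` matrix whose `(i,j)` entry is the odd
generator `X_{ij}` of the exterior algebra over `ℤ`, then for odd `p` the trace `Tr(X^p)`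
is `p` times an element of the (integral) exterior algebra. -/
theorem stmt1 (N p : ℕ) (hp : Odd p) :
    ∃ T : ExteriorAlgebra ℤ ((Fin N × Fin N) → ℤ),
      Matrix.trace
        ((Matrix.of fun i j : Fin N =>
            ExteriorAlgebra.ι ℤ (Pi.single (i, j) (1 : ℤ) : (Fin N × Fin N) → ℤ)) ^ p) =
        (p : ℤ) • T := by
  classical
  obtain ⟨m, rfl⟩ : ∃ m, p = m + 1 := by
    rcases p with _ | m
    · exact absurd hp (by simp)
    · exact ⟨m, rfl⟩
  have hm : Even m := by
    rcases hp with ⟨t, ht⟩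
    exact ⟨t, by omega⟩
  set X : Matrix (Fin N) (Fin N) (ExteriorAlgebra ℤ ((Fin N × Fin N) → ℤ)) :=
    Matrix.of fun i j : Fin N =>
      ExteriorAlgebra.ι ℤ (Pi.single (i, j) (1 : ℤ) : (Fin N × Fin N) → ℤ) with hX
  rw [trace_pow_eq_sum_cyc]
  have hterm : ∀ f : Fin (m + 1) → Fin N,
      ((List.finRange (m + 1)).map (fun k => X (f k) (f (k + 1)))).prod = trm f := by
    intro f
    rw [trm, vlist, List.map_map]
    rfl
  simp_rw [hterm]
  rw [Finset.sum_partition (pathSetoid N m)]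
  apply Finset.sum_induction _ (fun x => ∃ T, x = ((m + 1 : ℕ) : ℤ) • T)
  · rintro x y ⟨a, rfl⟩ ⟨b, rfl⟩
    exact ⟨a + b, (smul_add _ _ _).symm⟩
  · exact ⟨0, (smul_zero _).symm⟩
  intro c hc
  obtain ⟨f, -, rfl⟩ := Finset.mem_image.mp hc
  have hfilter : (Finset.univ.filter
        (fun g => Quotient.mk (pathSetoid N m) g = Quotient.mk (pathSetoid N m) f)) =
      Finset.univ.image (fun j : Fin (m + 1) => shiftF j f) := by
    ext g
    simp only [Finset.mem_filter, Finset.mem_univ, true_and, Finset.mem_image]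
    constructor
    · intro h
      obtain ⟨j, rfl⟩ := Quotient.exact h
      exact ⟨-j, by rw [shiftF_shiftF, neg_add_cancel, shiftF_zero]⟩
    · rintro ⟨j, rfl⟩
      exact Quotient.sound ⟨-j, by rw [shiftF_shiftF, neg_add_cancel, shiftF_zero]⟩
  rw [hfilter]
  by_cases hinj : ∀ j1 j2 : Fin (m + 1), shiftF j1 f = shiftF j2 f → j1 = j2
  · refine ⟨trm f, ?_⟩
    rw [Finset.sum_image (fun j1 _ j2 _ h => hinj j1 j2 h)]
    have : ∀ j : Fin (m + 1), trm (shiftF j f) = trm f := fun j => trm_shiftF hm j f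
    simp_rw [this]
    rw [Finset.sum_const, Finset.card_univ, Fintype.card_fin]
    rw [natCast_zsmul]
  · push_neg at hinj
    obtain ⟨j1, j2, heq, hne⟩ := hinj
    have hper : ∀ k, f (k + (j1 - j2)) = f k := by
      intro k
      have h1 := congrFun heq (k - j2)
      simp only [shiftF] at h1
      have e1 : k - j2 + j1 = k + (j1 - j2) := by abel
      have e2 : k - j2 + j2 = k := by abel
      rwa [e1, e2] at h1
    have h0 : trm f = 0 := trm_eq_zero_of_period f (j1 - j2) (sub_ne_zero_of_ne hne) hper
    refine ⟨0, ?_⟩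
    rw [smul_zero]
    apply Finset.sum_eq_zero
    intro g hg
    obtain ⟨j, -, rfl⟩ := Finset.mem_image.mp hg
    rw [trm_shiftF hm j f, h0]
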